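/- Every completion-forced node u of the cotree T is filled (i.e. x is adjacent to all of V(u)) in every constrained cograph completion of G+x. -/

import Mathlib

universe u

def IsCograph {α : Type*} (G : SimpleGraph α) : Prop :=
  ¬ ∃ f : Fin 4 → α, Function.Injective f ∧
      ∀ i j : Fin 4, G.Adj (f i) (f j) ↔ (i.val + 1 = j.val ∨ j.val + 1 = i.val)

inductive Cotree (V : Type u) : Type u where
  | leaf : V → Cotree V
  | node : Bool → List (Cotree V) → Cotree V

namespace Cotree

variable {V : Type u}

def leaves : Cotree V → List V
  | .leaf v => [v]
  | .node _ ts => ts.attach.flatMap (fun t => t.1.leaves)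

decreasing_by simp_wf; have := List.sizeOf_lt_of_mem t.2; omega

def subtrees : Cotree V → List (Cotree V)
  | .leaf v => [.leaf v]
  | .node b ts => .node b ts :: ts.attach.flatMap (fun t => t.1.subtrees)

decreasing_by simp_wf; have := List.sizeOf_lt_of_mem t.2; omega

def children : Cotree V → List (Cotree V)
  | .leaf _ => []
  | .node _ ts => ts

def isSeries : Cotree V → Prop
  | .node true _ => True
  | _ => False

def isParallel : Cotree V → Prop
  | .node false _ => True
  | _ => False

def adj : Cotree V → V → V → Prop
  | .leaf _, _, _ => False
  | .node b ts, x, y =>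
      (∃ t ∈ ts.attach, adj t.1 x y) ∨
      (b = true ∧ ∃ t ∈ ts.attach, ∃ s ∈ ts.attach,
        t.1 ≠ s.1 ∧ x ∈ t.1.leaves ∧ y ∈ s.1.leaves)

decreasing_by simp_wf; have := List.sizeOf_lt_of_mem t.2; omega

def valid : Cotree V → Prop
  | .leaf _ => True
  | .node b ts => 2 ≤ ts.length ∧ ∀ t ∈ ts.attach, valid t.1 ∧
      ∀ b' ts', t.1 = .node b' ts' → b' ≠ b

decreasing_by simp_wf; have := List.sizeOf_lt_of_mem t.2; omega

def hollow (N : Set V) (t : Cotree V) : Prop := ∀ v ∈ t.leaves, v ∉ N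
def full (N : Set V) (t : Cotree V) : Prop := ∀ v ∈ t.leaves, v ∈ N
def uniform (N : Set V) (t : Cotree V) : Prop := full N t ∨ hollow N t
def mixed (N : Set V) (t : Cotree V) : Prop := ¬ uniform N t

def forced (N : Set V) : Cotree V → Prop
  | .leaf v => v ∈ N
  | .node b ts =>
      full N (.node b ts) ∨
      (b = false ∧ ∀ t ∈ ts, ¬ hollow N t) ∨
      (b = true ∧ ∀ t ∈ ts.attach, forced N t.1)

decreasing_by simp_wf; have := List.sizeOf_lt_of_mem t.2; omega

def eligible (N : Set V) : Cotree V → Cotree V → Prop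
  | .leaf v, u => u = .leaf v
  | .node b ts, u => u = .node b ts ∨
      ∃ t ∈ ts.attach, eligible N t.1 u ∧
        (b = false → ∀ s ∈ ts, s ≠ t.1 → hollow N s)

decreasing_by simp_wf; have := List.sizeOf_lt_of_mem t.2; omega

def IsLcaLeaves (T u : Cotree V) (x y : V) : Prop :=
  u ∈ T.subtrees ∧ x ∈ u.leaves ∧ y ∈ u.leaves ∧
    ∀ c ∈ u.children, ¬ (x ∈ c.leaves ∧ y ∈ c.leaves)

def IsLcaNodeLeaf (T w u : Cotree V) (y : V) : Prop :=
  w ∈ T.subtrees ∧ u ∈ w.subtrees ∧ y ∈ w.leaves ∧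
    ∀ c ∈ w.children, ¬ (u ∈ c.subtrees ∧ y ∈ c.leaves)

def graphOf (T : Cotree V) : SimpleGraph V :=
  SimpleGraph.fromRel (fun a b => T.adj a b)

def graphPlus (T : Cotree V) (N : Set V) : SimpleGraph (Option V) :=
  SimpleGraph.fromRel (fun a b =>
    match a, b with
    | some u, some v => T.adj u v
    | none, some v => v ∈ N
    | _, _ => False)

def IsConstrainedCompletion (T : Cotree V) (Nx N' : Set V) : Prop :=
  Nx ⊆ N' ∧ (∀ v ∈ N', v ∈ T.leaves) ∧ IsCograph (graphPlus T N')

def IsMinimalConstrainedCompletion (T : Cotree V) (Nx N' : Set V) : Prop :=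
  IsConstrainedCompletion T Nx N' ∧
    ∀ N'' ⊆ N', IsConstrainedCompletion T Nx N'' → N'' = N'

def IsInsertionNode (T : Cotree V) (N' : Set V) (u : Cotree V) : Prop :=
  u ∈ T.subtrees ∧ mixed N' u ∧ (∀ c ∈ u.children, uniform N' c) ∧
    ∀ y ∈ T.leaves, y ∉ u.leaves →
      (y ∈ N' ↔ ∃ w, IsLcaNodeLeaf T w u y ∧ w.isSeries)

def IsCMInsertionNode (T : Cotree V) (Nx : Set V) (u : Cotree V) : Prop :=
  ∃ N', IsMinimalConstrainedCompletion T Nx N' ∧ IsInsertionNode T N' u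

def anchored (T u : Cotree V) (Nx : Set V) : Set V :=
  Nx ∪ {y | y ∈ T.leaves ∧ y ∉ u.leaves ∧ ∃ w, IsLcaNodeLeaf T w u y ∧ w.isSeries}
     ∪ {y | ∃ c ∈ u.children, ¬ hollow Nx c ∧ y ∈ c.leaves}

end Cotree

/-! Induction on the forced node: full nodes and series nodes are immediate. At a parallel node
whose children all meet `Nx`, suppose a leaf `v` of a child `c` is not filled. Since `c` is a leaf
or a series node and also has a filled leaf, some edge `p q` inside `c` joins an unfilled leaf `p`
to a filled leaf `q` (series nodes have diameter at most two). A filled leaf `r` of another child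
is adjacent to neither, so `p – q – x – r` is an induced `P₄` of the completion. -/

theorem List.eq_of_mem_of_mem_of_nodup_flatMap {α β : Type*} {f : α → List β}
    {l : List α} {t s : α} {x : β} (h : (l.flatMap f).Nodup) (ht : t ∈ l) (hs : s ∈ l)
    (hxt : x ∈ f t) (hxs : x ∈ f s) : t = s := by
  have : Std.Symm (Function.onFun List.Disjoint f) := ⟨fun _ _ h => List.Disjoint.symm h⟩
  by_contra hne
  exact (List.nodup_flatMap.1 h).2.forall ht hs hne hxt hxs

theorem List.exists_mem_ne_of_nodup_flatMap {α β : Type*} {f : α → List β}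
    {l : List α} {t : α} {x : β} (hl : 2 ≤ l.length) (h : (l.flatMap f).Nodup)
    (ht : t ∈ l) (hx : x ∈ f t) : ∃ s ∈ l, s ≠ t := by
  obtain ⟨a, b, l, rfl⟩ : ∃ a b l', l = a :: b :: l' := by
    match l, hl with
    | a :: b :: l', _ => exact ⟨a, b, l', rfl⟩
  by_contra! hall
  have hab := (List.pairwise_cons.1 (List.nodup_flatMap.1 h).2).1 b (by simp)
  rw [hall a (by simp), hall b (by simp)] at hab
  exact hab hx hx

namespace Cotree

variable {V : Type u}

@[elab_as_elim]
theorem ind {P : Cotree V → Prop} (leaf : ∀ v, P (.leaf v))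
    (node : ∀ b ts, (∀ t ∈ ts, P t) → P (.node b ts)) : ∀ t, P t
  | .leaf v => leaf v
  | .node b ts => node b ts fun t _ => ind leaf node t
decreasing_by simp_wf; have := List.sizeOf_lt_of_mem (by assumption : t ∈ ts); omega

@[simp] theorem leaves_leaf (v : V) : (leaf v).leaves = [v] := by rw [leaves]

@[simp] theorem leaves_node (b : Bool) (ts : List (Cotree V)) :
    (node b ts).leaves = ts.flatMap leaves := by
  simp [leaves]

@[simp] theorem subtrees_leaf (v : V) : (leaf v).subtrees = [leaf v] := by rw [subtrees]

@[simp] theorem subtrees_node (b : Bool) (ts : List (Cotree V)) :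
    (node b ts).subtrees = node b ts :: ts.flatMap subtrees := by
  simp [subtrees]

theorem adj_leaf (v x y : V) : ¬ (leaf v).adj x y := by rw [adj]; exact id

theorem adj_node {b : Bool} {ts : List (Cotree V)} {x y : V} :
    (node b ts).adj x y ↔ (∃ t ∈ ts, t.adj x y) ∨
      (b = true ∧ ∃ t ∈ ts, ∃ s ∈ ts, t ≠ s ∧ x ∈ t.leaves ∧ y ∈ s.leaves) := by
  rw [adj]
  simp only [List.mem_attach, true_and, Subtype.exists, exists_prop]

theorem valid_node {b : Bool} {ts : List (Cotree V)} :
    (node b ts).valid ↔ 2 ≤ ts.length ∧ ∀ t ∈ ts, t.valid ∧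
      ∀ b' ts', t = .node b' ts' → b' ≠ b := by
  simp [valid]

@[simp] theorem forced_leaf {N : Set V} {v : V} : forced N (leaf v) ↔ v ∈ N := by rw [forced]

theorem forced_node {N : Set V} {b : Bool} {ts : List (Cotree V)} :
    forced N (node b ts) ↔ full N (.node b ts) ∨
      (b = false ∧ ∀ t ∈ ts, ¬ hollow N t) ∨
      (b = true ∧ ∀ t ∈ ts, forced N t) := by
  simp [forced]

theorem mem_subtrees_self (t : Cotree V) : t ∈ t.subtrees := by
  cases t <;> simp

theorem mem_subtrees_trans {T w u : Cotree V} (hu : u ∈ w.subtrees) (hw : w ∈ T.subtrees) :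
    u ∈ T.subtrees := by
  induction T using ind with
  | leaf v => simp_all
  | node b ts ih =>
    rcases List.mem_cons.1 (subtrees_node b ts ▸ hw) with rfl | hw
    · exact hu
    · obtain ⟨t, ht, hw⟩ := List.mem_flatMap.1 hw
      simpa using Or.inr ⟨t, ht, ih t ht hw⟩

theorem mem_subtrees_of_mem {T : Cotree V} {b : Bool} {ts : List (Cotree V)} {t : Cotree V}
    (ht : t ∈ ts) (hT : node b ts ∈ T.subtrees) : t ∈ T.subtrees :=
  mem_subtrees_trans (by simpa using Or.inr ⟨t, ht, mem_subtrees_self t⟩) hT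

theorem leaves_sublist_of_mem_subtrees {T u : Cotree V} (hu : u ∈ T.subtrees) :
    u.leaves.Sublist T.leaves := by
  induction T using ind with
  | leaf v => simp_all
  | node b ts ih =>
    rcases List.mem_cons.1 (subtrees_node b ts ▸ hu) with rfl | hu
    · rfl
    · obtain ⟨t, ht, hu⟩ := List.mem_flatMap.1 hu
      rw [leaves_node]
      exact (ih t ht hu).trans (List.sublist_flatten_of_mem (List.mem_map_of_mem ht))

theorem valid_of_mem_subtrees {T u : Cotree V} (hT : T.valid) (hu : u ∈ T.subtrees) :
    u.valid := by
  induction T using ind with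
  | leaf v => simp_all
  | node b ts ih =>
    rcases List.mem_cons.1 (subtrees_node b ts ▸ hu) with rfl | hu
    · exact hT
    · obtain ⟨t, ht, hu⟩ := List.mem_flatMap.1 hu
      exact ih t ht ((valid_node.1 hT).2 t ht).1 hu

theorem exists_mem_leaves_of_valid {t : Cotree V} (ht : t.valid) : ∃ x, x ∈ t.leaves := by
  induction t using ind with
  | leaf v => exact ⟨v, by simp⟩
  | node b ts ih =>
    obtain ⟨hlen, hch⟩ := valid_node.1 ht
    obtain ⟨s, hs⟩ := List.exists_mem_of_length_pos (by omega : 0 < ts.length)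
    obtain ⟨x, hx⟩ := ih s hs (hch s hs).1
    exact ⟨x, by simpa using ⟨s, hs, hx⟩⟩

theorem mem_leaves_of_adj {t : Cotree V} {x y : V} (h : t.adj x y) :
    x ∈ t.leaves ∧ y ∈ t.leaves := by
  induction t using ind with
  | leaf v => exact absurd h (adj_leaf v x y)
  | node b ts ih =>
    simp only [leaves_node, List.mem_flatMap]
    rcases adj_node.1 h with ⟨t, ht, h⟩ | ⟨_, t, ht, s, hs, _, hx, hy⟩
    · exact ⟨⟨t, ht, (ih t ht h).1⟩, ⟨t, ht, (ih t ht h).2⟩⟩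
    · exact ⟨⟨t, ht, hx⟩, ⟨s, hs, hy⟩⟩

theorem adj_of_mem_subtrees {T u : Cotree V} {x y : V} (hu : u ∈ T.subtrees) (h : u.adj x y) :
    T.adj x y := by
  induction T using ind with
  | leaf v => simp_all
  | node b ts ih =>
    rcases List.mem_cons.1 (subtrees_node b ts ▸ hu) with rfl | hu
    · exact h
    · obtain ⟨t, ht, hu⟩ := List.mem_flatMap.1 hu
      exact adj_node.2 (Or.inl ⟨t, ht, ih t ht hu⟩)

theorem adj_of_adj_of_mem_subtrees {T u : Cotree V} {x y : V} (hnd : T.leaves.Nodup)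
    (hu : u ∈ T.subtrees) (hx : x ∈ u.leaves) (hy : y ∈ u.leaves) (h : T.adj x y) :
    u.adj x y := by
  induction T using ind with
  | leaf v => simp_all
  | node b ts ih =>
    rcases List.mem_cons.1 (subtrees_node b ts ▸ hu) with rfl | hu
    · exact h
    obtain ⟨t, ht, hu⟩ := List.mem_flatMap.1 hu
    rw [leaves_node] at hnd
    have hxt := (leaves_sublist_of_mem_subtrees hu).subset hx
    have hyt := (leaves_sublist_of_mem_subtrees hu).subset hy
    refine ih t ht (hnd.sublist (List.sublist_flatten_of_mem (List.mem_map_of_mem ht))) hu ?_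
    rcases adj_node.1 h with ⟨s, hs, h⟩ | ⟨_, t', ht', s', hs', hne, hx', hy'⟩
    · obtain rfl := List.eq_of_mem_of_mem_of_nodup_flatMap hnd hs ht (mem_leaves_of_adj h).1 hxt
      exact h
    · obtain rfl := List.eq_of_mem_of_mem_of_nodup_flatMap hnd ht' ht hx' hxt
      exact absurd (List.eq_of_mem_of_mem_of_nodup_flatMap hnd hs' ht hy' hyt) hne.symm

theorem ne_of_mem_leaves_of_ne {b : Bool} {ts : List (Cotree V)} {t s : Cotree V} {x y : V}
    (hnd : (node b ts).leaves.Nodup) (ht : t ∈ ts) (hs : s ∈ ts) (hts : t ≠ s)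
    (hx : x ∈ t.leaves) (hy : y ∈ s.leaves) : x ≠ y := by
  rintro rfl
  exact hts (List.eq_of_mem_of_mem_of_nodup_flatMap (leaves_node b ts ▸ hnd) ht hs hx hy)

theorem graphOf_adj_of_series {T : Cotree V} {ts : List (Cotree V)} {t s : Cotree V} {x y : V}
    (hnd : T.leaves.Nodup) (hu : node true ts ∈ T.subtrees) (ht : t ∈ ts) (hs : s ∈ ts)
    (hts : t ≠ s) (hx : x ∈ t.leaves) (hy : y ∈ s.leaves) : (graphOf T).Adj x y := by
  refine (SimpleGraph.fromRel_adj _ _ _).2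
    ⟨ne_of_mem_leaves_of_ne ((leaves_sublist_of_mem_subtrees hu).nodup hnd) ht hs hts hx hy,
      Or.inl (adj_of_mem_subtrees hu (adj_node.2 (Or.inr ⟨rfl, t, ht, s, hs, hts, hx, hy⟩)))⟩

theorem not_graphOf_adj_of_parallel {T : Cotree V} {ts : List (Cotree V)} {t s : Cotree V}
    {x y : V} (hnd : T.leaves.Nodup) (hu : node false ts ∈ T.subtrees) (ht : t ∈ ts)
    (hs : s ∈ ts) (hts : t ≠ s) (hx : x ∈ t.leaves) (hy : y ∈ s.leaves) :
    ¬ (graphOf T).Adj x y := by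
  have hndu := leaves_node false ts ▸ (leaves_sublist_of_mem_subtrees hu).nodup hnd
  have key : ∀ {t s x y}, t ∈ ts → s ∈ ts → t ≠ s → x ∈ t.leaves → y ∈ s.leaves →
      ¬ T.adj x y := by
    intro t s x y ht hs hts hx hy h
    have hxu : x ∈ (node false ts).leaves := by simpa using ⟨t, ht, hx⟩
    have hyu : y ∈ (node false ts).leaves := by simpa using ⟨s, hs, hy⟩
    rcases adj_node.1 (adj_of_adj_of_mem_subtrees hnd hu hxu hyu h) with ⟨c, hc, h⟩ | ⟨hb, -⟩
    · obtain ⟨hxc, hyc⟩ := mem_leaves_of_adj h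
      exact hts ((List.eq_of_mem_of_mem_of_nodup_flatMap hndu ht hc hx hxc).trans
        (List.eq_of_mem_of_mem_of_nodup_flatMap hndu hc hs hyc hy))
    · exact Bool.false_ne_true hb
  simp only [graphOf, SimpleGraph.fromRel_adj, not_and, not_or]
  exact fun _ => ⟨key ht hs hts hx hy, key hs ht hts.symm hy hx⟩

theorem graphPlus_adj_some_some {T : Cotree V} {N : Set V} {a b : V} :
    (graphPlus T N).Adj (some a) (some b) ↔ (graphOf T).Adj a b := by
  simp [graphPlus, graphOf]

theorem graphPlus_adj_none_some {T : Cotree V} {N : Set V} {b : V} :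
    (graphPlus T N).Adj none (some b) ↔ b ∈ N := by
  simp [graphPlus]

theorem not_isCograph_graphPlus {T : Cotree V} {N : Set V} {p q r : V}
    (hpq : (graphOf T).Adj p q) (hp : p ∉ N) (hq : q ∈ N) (hr : r ∈ N)
    (hpr : ¬ (graphOf T).Adj p r) (hqr : ¬ (graphOf T).Adj q r) (hqr' : q ≠ r) :
    ¬ IsCograph (graphPlus T N) := by
  have hpr' : p ≠ r := fun h => hp (h ▸ hr)
  refine not_not.2 ⟨![some p, some q, none, some r], ?_, ?_⟩
  · intro i j h
    fin_cases i <;> fin_cases j <;> simp_all [hpq.ne]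
  · intro i j
    fin_cases i <;> fin_cases j <;>
      simp [graphPlus_adj_some_some, graphPlus_adj_none_some,
        (graphPlus T N).adj_comm (some _) none, (graphOf T).adj_comm q p,
        (graphOf T).adj_comm r _, hp, hq, hr, hpq, hpr, hqr]

theorem exists_graphOf_adj_not_mem_mem_of_series {T : Cotree V} {N : Set V}
    {cs : List (Cotree V)} {v a : V} (hval : T.valid) (hnd : T.leaves.Nodup)
    (hc : node true cs ∈ T.subtrees) (hv : v ∈ (node true cs).leaves) (hvN : v ∉ N)
    (ha : a ∈ (node true cs).leaves) (haN : a ∈ N) :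
    ∃ p q, p ∉ N ∧ q ∈ N ∧ (graphOf T).Adj p q ∧
      p ∈ (node true cs).leaves ∧ q ∈ (node true cs).leaves := by
  obtain ⟨d, hd, hvd⟩ := List.mem_flatMap.1 (leaves_node true cs ▸ hv)
  obtain ⟨e, he, hae⟩ := List.mem_flatMap.1 (leaves_node true cs ▸ ha)
  by_cases hde : d = e
  · subst hde
    obtain ⟨hlen, hch⟩ := valid_node.1 (valid_of_mem_subtrees hval hc)
    have hndc := leaves_node true cs ▸ (leaves_sublist_of_mem_subtrees hc).nodup hnd
    obtain ⟨e', he', hed⟩ := List.exists_mem_ne_of_nodup_flatMap hlen hndc hd hvd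
    obtain ⟨w, hwe'⟩ := exists_mem_leaves_of_valid (hch e' he').1
    have hw : w ∈ (node true cs).leaves := by simpa using ⟨e', he', hwe'⟩
    by_cases hwN : w ∈ N
    · exact ⟨v, w, hvN, hwN, graphOf_adj_of_series hnd hc hd he' hed.symm hvd hwe', hv, hw⟩
    · exact ⟨w, a, hwN, haN, graphOf_adj_of_series hnd hc he' hd hed hwe' hae, hw, ha⟩
  · exact ⟨v, a, hvN, haN, graphOf_adj_of_series hnd hc hd he hde hvd hae, hv, ha⟩

theorem full_of_parallel_of_forall_not_hollow {T : Cotree V} {N : Set V}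
    {ts : List (Cotree V)} (hval : T.valid) (hnd : T.leaves.Nodup)
    (hcog : IsCograph (graphPlus T N)) (hu : node false ts ∈ T.subtrees)
    (h : ∀ t ∈ ts, ¬ hollow N t) : full N (node false ts) := by
  intro v hv
  by_contra hvN
  obtain ⟨hlen, hch⟩ := valid_node.1 (valid_of_mem_subtrees hval hu)
  have hndu := (leaves_sublist_of_mem_subtrees hu).nodup hnd
  obtain ⟨c, hc, hvc⟩ := List.mem_flatMap.1 (leaves_node false ts ▸ hv)
  obtain ⟨a, hac, haN⟩ : ∃ a ∈ c.leaves, a ∈ N := by simpa [hollow] using h c hc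
  obtain ⟨c', hc', hcc'⟩ :=
    List.exists_mem_ne_of_nodup_flatMap hlen (leaves_node false ts ▸ hndu) hc hac
  obtain ⟨r, hrc', hrN⟩ : ∃ r ∈ c'.leaves, r ∈ N := by simpa [hollow] using h c' hc'
  obtain ⟨p, q, hpN, hqN, hpq, hpc, hqc⟩ : ∃ p q, p ∉ N ∧ q ∈ N ∧ (graphOf T).Adj p q ∧
      p ∈ c.leaves ∧ q ∈ c.leaves := by
    cases c with
    | leaf w =>
      simp only [leaves_leaf, List.mem_singleton] at hvc hac
      exact absurd (hvc ▸ hac ▸ haN) hvN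
    | node bc cs =>
      obtain rfl : bc = true := by simpa using (hch _ hc).2 bc cs rfl
      exact exists_graphOf_adj_not_mem_mem_of_series hval hnd
        (mem_subtrees_of_mem hc hu) hvc hvN hac haN
  exact not_isCograph_graphPlus hpq hpN hqN hrN
    (not_graphOf_adj_of_parallel hnd hu hc hc' hcc'.symm hpc hrc')
    (not_graphOf_adj_of_parallel hnd hu hc hc' hcc'.symm hqc hrc')
    (ne_of_mem_leaves_of_ne hndu hc hc' hcc'.symm hqc hrc') hcog

theorem full_of_forced {T u : Cotree V} {Nx N : Set V} (hval : T.valid) (hnd : T.leaves.Nodup)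
    (hsub : Nx ⊆ N) (hcog : IsCograph (graphPlus T N)) (hu : u ∈ T.subtrees)
    (hf : forced Nx u) : full N u := by
  induction u using ind with
  | leaf v => simpa [full] using hsub (forced_leaf.1 hf)
  | node b ts ih =>
    rcases forced_node.1 hf with hfull | ⟨rfl, hpar⟩ | ⟨rfl, hser⟩
    · exact fun v hv => hsub (hfull v hv)
    · exact full_of_parallel_of_forall_not_hollow hval hnd hcog hu
        fun t ht hN => hpar t ht fun v hv hvNx => hN v hv (hsub hvNx)
    · intro v hv
      obtain ⟨t, ht, hvt⟩ := List.mem_flatMap.1 (leaves_node true ts ▸ hv)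
      exact ih t ht (mem_subtrees_of_mem ht hu) (hser t ht) v hvt

end Cotree

theorem stmt_9_general {V : Type u} (T : Cotree V) (Nx : Set V)
    (hval : T.valid) (hnd : T.leaves.Nodup)
    (u : Cotree V) (hu : u ∈ T.subtrees) (hforced : Cotree.forced Nx u)
    (N' : Set V) (hcc : Cotree.IsConstrainedCompletion T Nx N') :
    ∀ v ∈ u.leaves, v ∈ N' :=
  Cotree.full_of_forced hval hnd hcc.1 hcc.2.2 hu hforced

theorem stmt_9 {V : Type u} (T : Cotree V) (Nx : Set V)
    (hval : T.valid) (hnd : T.leaves.Nodup) (hNx : ∀ v ∈ Nx, v ∈ T.leaves)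
    (u : Cotree V) (hu : u ∈ T.subtrees) (hforced : Cotree.forced Nx u)
    (N' : Set V) (hcc : Cotree.IsConstrainedCompletion T Nx N') :
    ∀ v ∈ u.leaves, v ∈ N' :=
  stmt_9_general T Nx hval hnd u hu hforced N' hcc
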